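/- Let w₀ denote the longest element of W and fix w ∈ W. Then: (1) for every v ∈ W, the element v·(v⁻¹ * w) satisfies v·(v⁻¹ * w) ≤ w, so the assignment g_w(v) := v·(v⁻¹ * w) defines a map g_w : W → {q ∈ W : q ≤ w}; and (2) if v ≤ w, then g_w(v w₀) = v. -/

import Mathlib

open scoped Classical

/-- Data of a root system with a fixed choice of simple roots: an ambient
`ℚ`-vector space `V`, a set of roots `Φ` with a distinguished subset `pos` of
positive roots, a coroot functional `coroot β = ⟨·, β^∨⟩` for each root, and
simple roots `α 1, …, α r`. -/
structure RootData where
  r : ℕ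
  V : Type
  [grp : AddCommGroup V]
  [mod : Module ℚ V]
  Φ : Set V
  pos : Set V
  coroot : V → Module.Dual ℚ V
  α : Fin r → V

attribute [instance] RootData.grp RootData.mod

namespace RootData

variable (R : RootData)

/-- The group of linear automorphisms of `V`, in which the Weyl group lives. -/
abbrev Aut : Type := R.V ≃ₗ[ℚ] R.V

/-- The linear map `v ↦ v - ⟨v, β^∨⟩ β`. -/
noncomputable def reflMap (β : R.V) : R.V →ₗ[ℚ] R.V :=
  LinearMap.id - (R.coroot β).smulRight β

/-- The reflection `s_β` associated to a root `β`, as a linear automorphism. -/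
noncomputable def s (β : R.V) : R.Aut :=
  if h : (R.reflMap β).comp (R.reflMap β) = LinearMap.id then
    LinearEquiv.ofLinear (R.reflMap β) (R.reflMap β) h h
  else LinearEquiv.refl ℚ R.V

/-- The simple reflections `s_i := s_{α_i}`. -/
noncomputable def S (i : Fin R.r) : R.Aut := R.s (R.α i)

/-- The Weyl group `W`, generated by the simple reflections. -/
noncomputable def weylGroup : Subgroup R.Aut := Subgroup.closure (Set.range R.S)

/-- The product `s_{i_1} ⋯ s_{i_k}` of a word in the simple reflections. -/
noncomputable def wordProd (l : List (Fin R.r)) : R.Aut := (l.map R.S).prod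

/-- The length function on `W`: least length of a word in the simple
reflections expressing the given element. -/
noncomputable def len (w : R.Aut) : ℕ :=
  sInf {n | ∃ l : List (Fin R.r), l.length = n ∧ R.wordProd l = w}

/-- A word is reduced if its length equals the length of its product. -/
def Reduced (l : List (Fin R.r)) : Prop := R.len (R.wordProd l) = l.length

/-- The Bruhat order on `W`: `u ≤ w` iff some reduced word for `w` has a
subword whose product is `u`. -/
def BruhatLE (u w : R.Aut) : Prop :=
  ∃ l : List (Fin R.r), R.Reduced l ∧ R.wordProd l = w ∧
    ∃ l' : List (Fin R.r), l'.Sublist l ∧ R.wordProd l' = u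

/-- Strict Bruhat order. -/
def BruhatLT (u w : R.Aut) : Prop := R.BruhatLE u w ∧ u ≠ w

/-- One step of the Demazure product: `s_i * w := max {w, s_i w}`. -/
noncomputable def dmulStep (i : Fin R.r) (x : R.Aut) : R.Aut :=
  if R.len x < R.len (R.S i * x) then R.S i * x else x

/-- Demazure product of a word in the simple reflections against `w`:
`s_{i_1} * (s_{i_2} * (⋯ * (s_{i_k} * w)))`. -/
noncomputable def dmulList (l : List (Fin R.r)) (w : R.Aut) : R.Aut :=
  l.foldr R.dmulStep w

/-- The Demazure product `v * w` on the Weyl group, computed by choosing a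
reduced word for `v` (it is independent of this choice). -/
noncomputable def dmul (v w : R.Aut) : R.Aut :=
  if h : ∃ l : List (Fin R.r), R.Reduced l ∧ R.wordProd l = v then
    R.dmulList h.choose w
  else v * w

/-- The parabolic subgroup `W_{P_i}` generated by the simple reflections
`s_j`, `j ≠ i`. -/
noncomputable def WPar (i : Fin R.r) : Subgroup R.Aut :=
  Subgroup.closure (R.S '' {j | j ≠ i})

/-- `W^{P_i}`: the set of minimal-length representatives of cosets of
`W/W_{P_i}`. -/
def minReps (i : Fin R.r) : Set R.Aut :=
  {v | v ∈ R.weylGroup ∧ ∀ p ∈ R.WPar i, R.len v ≤ R.len (v * p)}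

/-- `u` is the minimal-length representative of the coset `w W_{P_i}`. -/
def IsMinRep (i : Fin R.r) (u w : R.Aut) : Prop :=
  u ∈ R.minReps i ∧ u⁻¹ * w ∈ R.WPar i

/-- A weight is dominant if it pairs nonnegatively with every simple coroot. -/
def Dominant (lam : R.V) : Prop := ∀ i : Fin R.r, 0 ≤ R.coroot (R.α i) lam

/-- The dual action of the Weyl group on `V* `: `(u f)(v) = f(u⁻¹ v)`. -/
noncomputable def dualAct (u : R.Aut) (f : Module.Dual ℚ R.V) : Module.Dual ℚ R.V :=
  f.comp (u.symm : R.V →ₗ[ℚ] R.V)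

/-- The Demazure polytope `P_λ^w := conv {uλ : u ∈ W, u ≤ w}`. -/
noncomputable def demPolytope (lam : R.V) (w : R.Aut) : Set R.V :=
  convexHull ℚ {m | ∃ u : R.Aut, u ∈ R.weylGroup ∧ R.BruhatLE u w ∧ m = u lam}

/-- Membership in the weight lattice `X`. -/
def IsWeight (lam : R.V) : Prop := ∀ β ∈ R.Φ, ∃ m : ℤ, R.coroot β lam = (m : ℚ)

/-- The root lattice `Q = ℤΦ`. -/
noncomputable def rootLattice : AddSubgroup R.V := AddSubgroup.closure R.Φ

/-- `w₀` is the longest element of the Weyl group. -/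
def IsLongest (w₀ : R.Aut) : Prop :=
  w₀ ∈ R.weylGroup ∧ ∀ g ∈ R.weylGroup, R.len g ≤ R.len w₀

/-- The positive roots `Φ_{P_i}⁺ = Φ⁺ ∩ span {α_j : j ≠ i}` of the standard
Levi subsystem. -/
def parPos (i : Fin R.r) : Set R.V :=
  {η | η ∈ R.pos ∧ η ∈ Submodule.span ℚ (R.α '' {j | j ≠ i})}

/-- The value `D_i (e^λ)` of the Demazure operator on a basis element of the
group ring `ℤ[X]`. -/
noncomputable def demOnBasis (i : Fin R.r) (lam : R.V) : R.V →₀ ℤ :=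
  if 0 ≤ ⌊R.coroot (R.α i) lam⌋ then
    ∑ k ∈ Finset.range (⌊R.coroot (R.α i) lam⌋.toNat + 1),
      Finsupp.single (lam - (k : ℚ) • R.α i) 1
  else if ⌊R.coroot (R.α i) lam⌋ = -1 then 0
  else - ∑ k ∈ Finset.range ((-⌊R.coroot (R.α i) lam⌋).toNat - 1),
      Finsupp.single (lam + ((k : ℚ) + 1) • R.α i) 1

/-- The Demazure operator `D_i`, as a `ℤ`-linear endomorphism of the group
ring `ℤ[X]` (realized as finitely supported functions `V →₀ ℤ`). -/
noncomputable def demOp (i : Fin R.r) : (R.V →₀ ℤ) →ₗ[ℤ] (R.V →₀ ℤ) :=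
  Finsupp.lsum ℤ fun lam => LinearMap.toSpanSingleton ℤ (R.V →₀ ℤ) (R.demOnBasis i lam)

/-- The Demazure character `D_{i_1} ⋯ D_{i_k} (e^λ)`. -/
noncomputable def demChar (l : List (Fin R.r)) (lam : R.V) : R.V →₀ ℤ :=
  l.foldr (fun i p => R.demOp i p) (Finsupp.single lam 1)

/-- The axioms of a finite crystallographic root system spanning `V`, with
simple roots `α_i` and positive roots `pos`. -/
structure IsRootSystem (R : RootData) : Prop where
  finite : R.Φ.Finite
  span_top : Submodule.span ℚ R.Φ = ⊤
  ne_zero : ∀ β ∈ R.Φ, β ≠ 0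
  coroot_self : ∀ β ∈ R.Φ, R.coroot β β = 2
  crystallographic : ∀ β ∈ R.Φ, ∀ γ ∈ R.Φ, ∃ m : ℤ, R.coroot β γ = (m : ℚ)
  reflection_stable : ∀ β ∈ R.Φ, ∀ γ ∈ R.Φ, γ - R.coroot β γ • β ∈ R.Φ
  simple_mem : ∀ i, R.α i ∈ R.Φ
  indep : LinearIndependent ℚ R.α
  pos_subset : R.pos ⊆ R.Φ
  pos_or_neg : ∀ β ∈ R.Φ, (β ∈ R.pos ∧ -β ∉ R.pos) ∨ (β ∉ R.pos ∧ -β ∈ R.pos)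
  simple_pos : ∀ i, R.α i ∈ R.pos
  pos_nonneg_comb : ∀ β ∈ R.pos, ∃ c : Fin R.r → ℚ, (∀ i, 0 ≤ c i) ∧ β = ∑ i, c i • R.α i

end RootData


/-!
If `l` is a reduced word for `u`, reading it from the right shows `u * w = u w''` for some
`w'' ≤ w`: a letter `s` either lengthens the current product `x w''` to `s x w''`, or leaves it
unchanged, and then `x w'' = s x (x⁻¹ s x) w''` where the reflection `x⁻¹ s x` shortens `w''`.
With `u = v⁻¹` this is (1).

For (2) put `u = (v w₀)⁻¹`, so that `u v = w₀⁻¹` and `ℓ(u) + ℓ(v) = ℓ(w₀)`. When lengths add, the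
Demazure product is the ordinary product, so `u * v = w₀⁻¹`. By the lifting property of the
Bruhat order the Demazure product is monotone in its second argument, hence `w₀⁻¹ ≤ u * w`, which
forces `u * w = w₀⁻¹` since `w₀⁻¹` is longest; then `v w₀ (u * w) = v`.

The Bruhat order is handled in its reflection-chain form `ChainLE`; that this agrees with the
subword definition is the subword property, proved together with the lifting property by
induction on length.
-/
section Reflections

variable {K V : Type*} [Field K] [AddCommGroup V] [Module K V]

@[simp] lemma linearEquiv_apply_inv_apply (x : V ≃ₗ[K] V) (v : V) : x (x⁻¹ v) = v :=
  x.apply_symm_apply v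

@[simp] lemma linearEquiv_inv_apply_apply (x : V ≃ₗ[K] V) (v : V) : x⁻¹ (x v) = v :=
  x.symm_apply_apply v

lemma mul_self_eq_one_of_forall_eq_sub_smul {t : V ≃ₗ[K] V} {f : Module.Dual K V} {β : V}
    (ht : ∀ v, t v = v - f v • β) (hf : f β = 2) : t * t = 1 := by
  ext v
  change t (t v) = v
  rw [ht, ht, map_sub, map_smul, smul_eq_mul, hf]
  module

lemma pow_apply_of_forall_eq_sub_smul {τ : V ≃ₗ[K] V} {g : Module.Dual K V} {β : V}
    (hτ : ∀ v, τ v = v - g v • β) (hg : g β = 0) (n : ℕ) (v : V) :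
    (τ ^ n) v = v - ((n : K) * g v) • β := by
  induction n generalizing v with
  | zero => simp
  | succ n ih =>
    rw [pow_succ, LinearEquiv.mul_apply, ih, hτ, map_sub, map_smul, hg]
    push_cast
    module

variable [CharZero K]

lemma eq_one_of_forall_eq_sub_smul {Φ : Set V} (hΦ : Φ.Finite) (hspan : Submodule.span K Φ = ⊤)
    {τ : V ≃ₗ[K] V} {g : Module.Dual K V} {β : V} (hβ : β ≠ 0)
    (hτ : ∀ v, τ v = v - g v • β) (hg : g β = 0) (hmaps : Set.MapsTo τ Φ Φ) : τ = 1 := by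
  have hpow : ∀ n : ℕ, Set.MapsTo ⇑(τ ^ n) Φ Φ := by
    intro n
    induction n with
    | zero => exact Set.mapsTo_id Φ
    | succ n ih => rw [pow_succ]; exact ih.comp hmaps
  have hgΦ : ∀ γ ∈ Φ, g γ = 0 := by
    intro γ hγ
    -- otherwise the orbit `γ - n g(γ) β` of `γ` is infinite
    by_contra hne
    refine Set.not_infinite.2 hΦ (Set.infinite_of_injective_forall_mem
      (f := fun n : ℕ => (τ ^ n) γ) (fun m n hmn => ?_) fun n => hpow n hγ)
    simp only [pow_apply_of_forall_eq_sub_smul hτ hg, sub_right_inj] at hmn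
    exact_mod_cast mul_right_cancel₀ hne (smul_left_injective K hβ hmn)
  have hg0 : g = 0 := LinearMap.ext_on hspan hgΦ
  ext v
  simp [hτ, hg0]

lemma eq_of_forall_eq_sub_smul {Φ : Set V} (hΦ : Φ.Finite) (hspan : Submodule.span K Φ = ⊤)
    {t₁ t₂ : V ≃ₗ[K] V} {f₁ f₂ : Module.Dual K V} {β : V} {a : K} (hβ : β ≠ 0)
    (h₁ : ∀ v, t₁ v = v - f₁ v • (a • β)) (hf₁ : f₁ (a • β) = 2)
    (h₂ : ∀ v, t₂ v = v - f₂ v • β) (hf₂ : f₂ β = 2)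
    (hm₁ : Set.MapsTo t₁ Φ Φ) (hm₂ : Set.MapsTo t₂ Φ Φ) : t₁ = t₂ := by
  have hτ : ∀ v, (t₁ * t₂) v = v - (f₂ + a • (f₁ ∘ₗ t₂.toLinearMap)) v • β := by
    intro v
    rw [LinearEquiv.mul_apply, h₁, h₂ v]
    simp only [LinearMap.add_apply, LinearMap.smul_apply, LinearMap.comp_apply,
      LinearEquiv.coe_coe, h₂ v, smul_eq_mul]
    module
  have hg : (f₂ + a • (f₁ ∘ₗ t₂.toLinearMap)) β = 0 := by
    simp only [LinearMap.add_apply, LinearMap.smul_apply, LinearMap.comp_apply,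
      LinearEquiv.coe_coe, h₂, hf₂, map_sub, map_smul, smul_eq_mul]
    rw [map_smul, smul_eq_mul] at hf₁
    linear_combination -hf₁
  have h1 := eq_one_of_forall_eq_sub_smul hΦ hspan hβ hτ hg (hm₁.comp hm₂)
  rw [eq_inv_of_mul_eq_one_left h1,
    inv_eq_of_mul_eq_one_right (mul_self_eq_one_of_forall_eq_sub_smul h₂ hf₂)]

end Reflections

namespace RootData

open List

variable {R : RootData}

lemma s_apply {β : R.V} (hβ : R.coroot β β = 2) (v : R.V) :
    R.s β v = v - R.coroot β v • β := by
  have hrefl : ∀ v, R.reflMap β v = v - R.coroot β v • β := by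
    simp [reflMap, LinearMap.smulRight]
  have hinvol : (R.reflMap β).comp (R.reflMap β) = LinearMap.id := by
    ext v
    simp only [LinearMap.comp_apply, hrefl, LinearMap.id_coe, id_eq, map_sub, map_smul,
      smul_eq_mul, hβ]
    module
  rw [RootData.s, dif_pos hinvol]
  exact hrefl v

lemma coroot_simple_self (hR : R.IsRootSystem) (i : Fin R.r) :
    R.coroot (R.α i) (R.α i) = 2 :=
  hR.coroot_self _ (hR.simple_mem i)

lemma S_apply (hR : R.IsRootSystem) (i : Fin R.r) (v : R.V) :
    R.S i v = v - R.coroot (R.α i) v • R.α i :=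
  s_apply (coroot_simple_self hR i) v

lemma S_mul_self (hR : R.IsRootSystem) (i : Fin R.r) : R.S i * R.S i = 1 :=
  mul_self_eq_one_of_forall_eq_sub_smul (S_apply hR i) (coroot_simple_self hR i)

lemma S_inv (hR : R.IsRootSystem) (i : Fin R.r) : (R.S i)⁻¹ = R.S i :=
  inv_eq_of_mul_eq_one_right (S_mul_self hR i)

lemma S_mul_S_mul (hR : R.IsRootSystem) (i : Fin R.r) (x : R.Aut) :
    R.S i * (R.S i * x) = x := by
  rw [← mul_assoc, S_mul_self hR, one_mul]

lemma S_mem (i : Fin R.r) : R.S i ∈ R.weylGroup :=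
  Subgroup.subset_closure ⟨i, rfl⟩

lemma S_mapsTo (hR : R.IsRootSystem) (i : Fin R.r) : Set.MapsTo (R.S i) R.Φ R.Φ := by
  intro γ hγ
  rw [S_apply hR]
  exact hR.reflection_stable _ (hR.simple_mem i) _ hγ

@[simp] lemma wordProd_nil : R.wordProd [] = 1 := rfl

@[simp] lemma wordProd_cons (i : Fin R.r) (l : List (Fin R.r)) :
    R.wordProd (i :: l) = R.S i * R.wordProd l := by
  simp [wordProd]

lemma wordProd_append (l m : List (Fin R.r)) :
    R.wordProd (l ++ m) = R.wordProd l * R.wordProd m := by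
  simp [wordProd]

lemma wordProd_mem (l : List (Fin R.r)) : R.wordProd l ∈ R.weylGroup := by
  induction l with
  | nil => exact one_mem _
  | cons i l ih => simpa using mul_mem (S_mem i) ih

lemma wordProd_reverse (hR : R.IsRootSystem) (l : List (Fin R.r)) :
    R.wordProd l.reverse = (R.wordProd l)⁻¹ := by
  induction l with
  | nil => simp
  | cons i l ih => simp [wordProd_append, ih, S_inv hR]

lemma exists_wordProd_eq (hR : R.IsRootSystem) {x : R.Aut} (hx : x ∈ R.weylGroup) :
    ∃ l, R.wordProd l = x := by
  induction hx using Subgroup.closure_induction with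
  | mem x hx => obtain ⟨i, rfl⟩ := hx; exact ⟨[i], by simp⟩
  | one => exact ⟨[], rfl⟩
  | mul x y _ _ hx hy =>
    obtain ⟨l, rfl⟩ := hx
    obtain ⟨m, rfl⟩ := hy
    exact ⟨l ++ m, wordProd_append l m⟩
  | inv x _ hx =>
    obtain ⟨l, rfl⟩ := hx
    exact ⟨l.reverse, wordProd_reverse hR l⟩

lemma len_wordProd_le (l : List (Fin R.r)) : R.len (R.wordProd l) ≤ l.length :=
  Nat.sInf_le ⟨l, rfl, rfl⟩

lemma exists_reduced (hR : R.IsRootSystem) {x : R.Aut} (hx : x ∈ R.weylGroup) :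
    ∃ l, R.Reduced l ∧ R.wordProd l = x := by
  obtain ⟨l₀, hl₀⟩ := exists_wordProd_eq hR hx
  obtain ⟨l, hlen, rfl⟩ := Nat.sInf_mem (⟨l₀.length, l₀, rfl, hl₀⟩ :
    {n | ∃ l : List (Fin R.r), l.length = n ∧ R.wordProd l = x}.Nonempty)
  exact ⟨l, hlen.symm, rfl⟩

lemma len_one : R.len (1 : R.Aut) = 0 :=
  Nat.le_zero.mp (len_wordProd_le [])

lemma len_S_le (i : Fin R.r) : R.len (R.S i) ≤ 1 := by
  simpa using len_wordProd_le [i]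

lemma len_mul_le (hR : R.IsRootSystem) {x y : R.Aut} (hx : x ∈ R.weylGroup)
    (hy : y ∈ R.weylGroup) : R.len (x * y) ≤ R.len x + R.len y := by
  obtain ⟨l, hl, rfl⟩ := exists_reduced hR hx
  obtain ⟨m, hm, rfl⟩ := exists_reduced hR hy
  unfold Reduced at hl hm
  simpa [← wordProd_append, hl, hm] using len_wordProd_le (l ++ m)

lemma len_inv (hR : R.IsRootSystem) {x : R.Aut} (hx : x ∈ R.weylGroup) :
    R.len x⁻¹ = R.len x := by
  have key : ∀ y ∈ R.weylGroup, R.len y⁻¹ ≤ R.len y := by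
    intro y hy
    obtain ⟨l, hl, rfl⟩ := exists_reduced hR hy
    unfold Reduced at hl
    simpa [← wordProd_reverse hR, hl] using len_wordProd_le l.reverse
  simpa using le_antisymm (key x hx) (key x⁻¹ (inv_mem hx))

lemma len_S_mul_le (hR : R.IsRootSystem) {x : R.Aut} (hx : x ∈ R.weylGroup) (i : Fin R.r) :
    R.len (R.S i * x) ≤ R.len x + 1 := by
  have := len_mul_le hR (S_mem i) hx
  have := len_S_le i
  omega

lemma len_le_len_S_mul_add_one (hR : R.IsRootSystem) {x : R.Aut} (hx : x ∈ R.weylGroup)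
    (i : Fin R.r) : R.len x ≤ R.len (R.S i * x) + 1 := by
  simpa [S_mul_S_mul hR] using len_S_mul_le hR (mul_mem (S_mem i) hx) i

lemma reduced_nil : R.Reduced [] := by
  simp [Reduced, len_one]

lemma reduced_cons_iff (hR : R.IsRootSystem) {i : Fin R.r} {l : List (Fin R.r)} :
    R.Reduced (i :: l) ↔ R.Reduced l ∧ R.len (R.wordProd l) < R.len (R.S i * R.wordProd l) := by
  have h₁ := len_wordProd_le l
  have h₂ := len_S_mul_le hR (wordProd_mem l) i
  simp only [Reduced, wordProd_cons, length_cons]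
  omega

lemma mapsTo_roots (hR : R.IsRootSystem) {x : R.Aut} (hx : x ∈ R.weylGroup) :
    Set.MapsTo x R.Φ R.Φ := by
  obtain ⟨l, rfl⟩ := exists_wordProd_eq hR hx
  induction l with
  | nil => exact Set.mapsTo_id _
  | cons i l ih => rw [wordProd_cons]; exact (S_mapsTo hR i).comp (ih (wordProd_mem l))


lemma neg_mem_pos_of_notMem (hR : R.IsRootSystem) {γ : R.V} (hγ : γ ∈ R.Φ)
    (h : γ ∉ R.pos) : -γ ∈ R.pos :=
  ((hR.pos_or_neg γ hγ).resolve_left fun h' => h h'.1).2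

lemma neg_notMem_pos (hR : R.IsRootSystem) {γ : R.V} (h : γ ∈ R.pos) : -γ ∉ R.pos :=
  ((hR.pos_or_neg γ (hR.pos_subset h)).resolve_right fun h' => h'.1 h).2

lemma exists_eq_smul_of_S_apply_notMem_pos (hR : R.IsRootSystem) {γ : R.V} {i : Fin R.r}
    (hγ : γ ∈ R.pos) (h : R.S i γ ∉ R.pos) : ∃ a : ℚ, 0 < a ∧ γ = a • R.α i := by
  obtain ⟨c, hc, hcγ⟩ := hR.pos_nonneg_comb γ hγ
  obtain ⟨d, hd, hdγ⟩ := hR.pos_nonneg_comb _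
    (neg_mem_pos_of_notMem hR (S_mapsTo hR i (hR.pos_subset hγ)) h)
  have hcoeff : ∀ j, c j + d j = (Pi.single i (R.coroot (R.α i) γ) : Fin R.r → ℚ) j := by
    refine Fintype.linearIndependent_iffₛ.1 hR.indep _ _ ?_
    simp only [add_smul, Finset.sum_add_distrib, ← hcγ, ← hdγ, S_apply hR, Pi.single_apply,
      ite_smul, zero_smul, Finset.sum_ite_eq', Finset.mem_univ, if_true]
    abel
  have hc0 : ∀ j ≠ i, c j = 0 := fun j hj => by
    have := hcoeff j
    rw [Pi.single_eq_of_ne hj] at this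
    linarith [hc j, hd j]
  have hγi : γ = c i • R.α i := by
    rw [hcγ]
    exact Finset.sum_eq_single i (fun j _ hj => by rw [hc0 j hj, zero_smul]) (by simp)
  refine ⟨c i, (hc i).lt_of_ne fun h0 => ?_, hγi⟩
  exact hR.ne_zero γ (hR.pos_subset hγ) (by rw [hγi, ← h0, zero_smul])

/-- The image of a positive root would be both a nonnegative and a nonpositive combination of
the simple roots. -/
lemma apply_notMem_pos_of_forall_simple (hR : R.IsRootSystem) {x : R.Aut}
    (hx : x ∈ R.weylGroup) (h : ∀ i, x (R.α i) ∉ R.pos) {β : R.V} (hβ : β ∈ R.pos) :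
    x β ∉ R.pos := by
  intro hxβ
  obtain ⟨c, hc, rfl⟩ := hR.pos_nonneg_comb β hβ
  obtain ⟨e, he, hxβe⟩ := hR.pos_nonneg_comb _ hxβ
  choose d hd hdsum using fun i => hR.pos_nonneg_comb _
    (neg_mem_pos_of_notMem hR (mapsTo_roots hR hx (hR.simple_mem i)) (h i))
  have hcoeff : ∀ j, e j + ∑ i, c i * d i j = 0 := by
    refine Fintype.linearIndependent_iff.1 hR.indep _ ?_
    calc ∑ j, (e j + ∑ i, c i * d i j) • R.α j
        = ∑ j, e j • R.α j + ∑ i, c i • ∑ j, d i j • R.α j := by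
          simp only [add_smul, Finset.sum_add_distrib, Finset.sum_smul, Finset.smul_sum,
            mul_smul]
          rw [Finset.sum_comm]
      _ = 0 := by simp [← hxβe, ← hdsum, map_sum]
  have he0 : ∀ j, e j = 0 := fun j => by
    linarith [hcoeff j, he j,
      Finset.sum_nonneg (s := Finset.univ) fun i _ => mul_nonneg (hc i) (hd i j)]
  exact hR.ne_zero _ (hR.pos_subset hxβ) (by simp [hxβe, he0])

structure IsReflection (R : RootData) (t : R.Aut) (β : R.V) : Prop where
  mem : t ∈ R.weylGroup
  pos : β ∈ R.pos
  exists_dual : ∃ f : Module.Dual ℚ R.V, (∀ v, t v = v - f v • β) ∧ f β = 2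

lemma isReflection_S (hR : R.IsRootSystem) (i : Fin R.r) : R.IsReflection (R.S i) (R.α i) :=
  ⟨S_mem i, hR.simple_pos i, R.coroot (R.α i), S_apply hR i, coroot_simple_self hR i⟩

namespace IsReflection

variable {t : R.Aut} {β : R.V}

lemma mul_self (ht : R.IsReflection t β) : t * t = 1 := by
  obtain ⟨f, hf, hfβ⟩ := ht.exists_dual
  exact mul_self_eq_one_of_forall_eq_sub_smul hf hfβ

lemma inv_eq (ht : R.IsReflection t β) : t⁻¹ = t :=
  inv_eq_of_mul_eq_one_right ht.mul_self

lemma apply_self (ht : R.IsReflection t β) : t β = -β := by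
  obtain ⟨f, hf, hfβ⟩ := ht.exists_dual
  rw [hf, hfβ]
  module

lemma conj (ht : R.IsReflection t β) {x : R.Aut} (hx : x ∈ R.weylGroup) (hxβ : x β ∈ R.pos) :
    R.IsReflection (x * t * x⁻¹) (x β) := by
  obtain ⟨f, hf, hfβ⟩ := ht.exists_dual
  refine ⟨mul_mem (mul_mem hx ht.mem) (inv_mem hx), hxβ, f ∘ₗ (x⁻¹ : R.Aut).toLinearMap,
    fun v => ?_, ?_⟩
  · change x (t (x⁻¹ v)) = _
    rw [hf, map_sub, map_smul, linearEquiv_apply_inv_apply]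
    rfl
  · change f (x⁻¹ (x β)) = 2
    rw [linearEquiv_inv_apply_apply, hfβ]

lemma exists_conj (hR : R.IsRootSystem) (ht : R.IsReflection t β) {x : R.Aut}
    (hx : x ∈ R.weylGroup) : ∃ β', R.IsReflection (x * t * x⁻¹) β' := by
  by_cases hxβ : x β ∈ R.pos
  · exact ⟨_, ht.conj hx hxβ⟩
  obtain ⟨f, hf, hfβ⟩ := ht.exists_dual
  refine ⟨-(x β), mul_mem (mul_mem hx ht.mem) (inv_mem hx),
    neg_mem_pos_of_notMem hR (mapsTo_roots hR hx (hR.pos_subset ht.pos)) hxβ,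
    -(f ∘ₗ (x⁻¹ : R.Aut).toLinearMap), fun v => ?_, ?_⟩
  · change x (t (x⁻¹ v)) = _
    rw [hf, map_sub, map_smul, linearEquiv_apply_inv_apply]
    simp
  · simp [hfβ]

lemma eq_of_eq_smul (hR : R.IsRootSystem) (ht : R.IsReflection t β) {t' : R.Aut} {β' : R.V}
    (ht' : R.IsReflection t' β') {a : ℚ} (h : β = a • β') : t = t' := by
  obtain ⟨f, hf, hfβ⟩ := ht.exists_dual
  obtain ⟨f', hf', hfβ'⟩ := ht'.exists_dual
  subst h
  exact eq_of_forall_eq_sub_smul hR.finite hR.span_top (hR.ne_zero _ (hR.pos_subset ht'.pos))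
    hf hfβ hf' hfβ' (mapsTo_roots hR ht.mem) (mapsTo_roots hR ht'.mem)

lemma strong_exchange (hR : R.IsRootSystem)
    (ht : R.IsReflection t β) (l : List (Fin R.r)) (hl : (R.wordProd l)⁻¹ β ∉ R.pos) :
    ∃ m, m <+ l ∧ m.length + 1 = l.length ∧ t * R.wordProd l = R.wordProd m := by
  induction l generalizing t β with
  | nil => exact absurd ht.pos (by simpa using hl)
  | cons i l ih =>
    rw [wordProd_cons, mul_inv_rev, S_inv hR] at hl
    by_cases hiβ : R.S i β ∈ R.pos
    · have hconj := ht.conj (S_mem i) hiβ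
      rw [S_inv hR] at hconj
      obtain ⟨m, hml, hlen, hm⟩ := ih hconj hl
      refine ⟨i :: m, hml.cons_cons i, by simp [hlen], ?_⟩
      rw [wordProd_cons, wordProd_cons, ← hm, ← S_mul_S_mul hR i (t * _)]
      group
    · obtain ⟨a, -, rfl⟩ := exists_eq_smul_of_S_apply_notMem_pos hR ht.pos hiβ
      rw [ht.eq_of_eq_smul hR (isReflection_S hR i) rfl]
      exact ⟨l, sublist_cons_self i l, rfl, by rw [wordProd_cons, S_mul_S_mul hR]⟩

lemma len_mul_lt (hR : R.IsRootSystem) {x : R.Aut}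
    (ht : R.IsReflection t β) (hx : x ∈ R.weylGroup) (h : x⁻¹ β ∉ R.pos) :
    R.len (t * x) < R.len x := by
  obtain ⟨l, hl, rfl⟩ := exists_reduced hR hx
  obtain ⟨m, -, hlen, hm⟩ := ht.strong_exchange hR l h
  unfold Reduced at hl
  have := len_wordProd_le m
  rw [hm]
  omega

lemma lt_len_mul (hR : R.IsRootSystem) {x : R.Aut}
    (ht : R.IsReflection t β) (hx : x ∈ R.weylGroup) (h : x⁻¹ β ∈ R.pos) :
    R.len x < R.len (t * x) := by
  have htx : (t * x)⁻¹ β ∉ R.pos := by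
    rw [mul_inv_rev, ht.inv_eq, LinearEquiv.mul_apply, ht.apply_self, map_neg]
    exact neg_notMem_pos hR h
  simpa [← mul_assoc, ht.mul_self] using ht.len_mul_lt hR (mul_mem ht.mem hx) htx

end IsReflection

lemma len_S_mul_lt_iff (hR : R.IsRootSystem) {x : R.Aut} (hx : x ∈ R.weylGroup) (i : Fin R.r) :
    R.len (R.S i * x) < R.len x ↔ x⁻¹ (R.α i) ∉ R.pos :=
  ⟨fun h hpos => h.not_gt ((isReflection_S hR i).lt_len_mul hR hx hpos),
    (isReflection_S hR i).len_mul_lt hR hx⟩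

lemma lt_len_S_mul_iff (hR : R.IsRootSystem) {x : R.Aut} (hx : x ∈ R.weylGroup) (i : Fin R.r) :
    R.len x < R.len (R.S i * x) ↔ x⁻¹ (R.α i) ∈ R.pos :=
  ⟨fun h => not_not.1 fun hneg => h.not_gt ((len_S_mul_lt_iff hR hx i).2 hneg),
    (isReflection_S hR i).lt_len_mul hR hx⟩

lemma len_S_mul_ne (hR : R.IsRootSystem) {x : R.Aut} (hx : x ∈ R.weylGroup) (i : Fin R.r) :
    R.len (R.S i * x) ≠ R.len x := by
  by_cases h : x⁻¹ (R.α i) ∈ R.pos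
  · exact ((lt_len_S_mul_iff hR hx i).2 h).ne'
  · exact ((len_S_mul_lt_iff hR hx i).2 h).ne

lemma exists_reduced_sublist (hR : R.IsRootSystem) (l : List (Fin R.r)) :
    ∃ m, m <+ l ∧ R.Reduced m ∧ R.wordProd m = R.wordProd l := by
  induction l with
  | nil => exact ⟨[], Sublist.refl _, reduced_nil, rfl⟩
  | cons i l ih =>
    obtain ⟨m, hml, hm, hprod⟩ := ih
    have hmW := wordProd_mem m
    rcases (len_S_mul_ne hR hmW i).lt_or_gt with hdown | hup
    · obtain ⟨m', hm'm, hlen, hm'⟩ := (isReflection_S hR i).strong_exchange hR m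
        ((len_S_mul_lt_iff hR hmW i).1 hdown)
      refine ⟨m', hm'm.trans (hml.trans (sublist_cons_self i l)), ?_, by simp [← hm', hprod]⟩
      have := len_le_len_S_mul_add_one hR hmW i
      unfold Reduced at hm ⊢
      rw [← hm']
      omega
    · exact ⟨i :: m, hml.cons_cons i, (reduced_cons_iff hR).2 ⟨hm, hup⟩, by simp [hprod]⟩

def ReflStep (R : RootData) (x y : R.Aut) : Prop :=
  ∃ t β, R.IsReflection t β ∧ y = t * x ∧ R.len x < R.len y

def ChainLE (R : RootData) : R.Aut → R.Aut → Prop := Relation.ReflTransGen R.ReflStep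

lemma ReflStep.len_lt {x y : R.Aut} (h : R.ReflStep x y) : R.len x < R.len y := by
  obtain ⟨-, -, -, -, h⟩ := h
  exact h

lemma ReflStep.mem {x y : R.Aut} (h : R.ReflStep x y) (hy : y ∈ R.weylGroup) :
    x ∈ R.weylGroup := by
  obtain ⟨t, β, ht, rfl, -⟩ := h
  simpa [← mul_assoc, ht.mul_self] using mul_mem ht.mem hy

lemma ReflStep.S_mul (hR : R.IsRootSystem) {x y : R.Aut} (h : R.ReflStep x y) (i : Fin R.r)
    (hi : R.len (R.S i * x) < R.len (R.S i * y)) : R.ReflStep (R.S i * x) (R.S i * y) := by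
  obtain ⟨t, β, ht, rfl, -⟩ := h
  obtain ⟨β', ht'⟩ := ht.exists_conj hR (S_mem i)
  refine ⟨_, β', ht', ?_, hi⟩
  rw [S_inv hR, mul_assoc _ (R.S i), S_mul_S_mul hR, mul_assoc]

lemma reflStep_S_mul (hR : R.IsRootSystem) {x : R.Aut} {i : Fin R.r}
    (h : R.len x < R.len (R.S i * x)) : R.ReflStep x (R.S i * x) :=
  ⟨R.S i, R.α i, isReflection_S hR i, rfl, h⟩

lemma S_mul_reflStep (hR : R.IsRootSystem) {x : R.Aut} {i : Fin R.r}
    (h : R.len (R.S i * x) < R.len x) : R.ReflStep (R.S i * x) x :=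
  ⟨R.S i, R.α i, isReflection_S hR i, (S_mul_S_mul hR i x).symm, h⟩

namespace ChainLE

variable {v w : R.Aut}

lemma mem (h : R.ChainLE v w) (hw : w ∈ R.weylGroup) : v ∈ R.weylGroup := by
  induction h with
  | refl => exact hw
  | tail _ hstep ih => exact ih (hstep.mem hw)

lemma len_le (h : R.ChainLE v w) : R.len v ≤ R.len w := by
  induction h with
  | refl => exact le_rfl
  | tail _ hstep ih => exact ih.trans hstep.len_lt.le

lemma eq_of_len_le (h : R.ChainLE v w) (hlen : R.len w ≤ R.len v) : v = w := by
  rcases Relation.ReflTransGen.cases_tail h with rfl | ⟨y, hvy, hyw⟩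
  · rfl
  · exact absurd ((len_le hvy).trans_lt hyw.len_lt) hlen.not_gt

lemma exists_sublist (hR : R.IsRootSystem) (h : R.ChainLE v w) {l : List (Fin R.r)}
    (hl : R.Reduced l) (hlw : R.wordProd l = w) : ∃ m, m <+ l ∧ R.wordProd m = v := by
  induction h generalizing l with
  | refl => exact ⟨l, Sublist.refl l, hlw⟩
  | tail _ hyw ih =>
    obtain ⟨t, β, ht, rfl, hlt⟩ := hyw
    have hneg : (R.wordProd l)⁻¹ β ∉ R.pos := fun hpos => by
      have := ht.lt_len_mul hR (wordProd_mem l) hpos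
      rw [hlw, ← mul_assoc, ht.mul_self, one_mul] at this
      omega
    obtain ⟨m₀, hm₀, -, hm₀y⟩ := ht.strong_exchange hR l hneg
    obtain ⟨m, hm, hmred, hmprod⟩ := exists_reduced_sublist hR m₀
    obtain ⟨m', hm', hm'v⟩ := ih hmred
      (by rw [hmprod, ← hm₀y, hlw, ← mul_assoc, ht.mul_self, one_mul])
    exact ⟨m', hm'.trans (hm.trans hm₀), hm'v⟩

end ChainLE

def SubwordChainLE (R : RootData) (n : ℕ) : Prop :=
  ∀ l : List (Fin R.r), R.Reduced l → l.length ≤ n →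
    ∀ l', l' <+ l → R.ChainLE (R.wordProd l') (R.wordProd l)

lemma ChainLE.chainLE_S_mul_of_len_S_mul_lt (hR : R.IsRootSystem) {n : ℕ}
    (hC : R.SubwordChainLE n) {v w : R.Aut} {i : Fin R.r} (h : R.ChainLE v w)
    (hw : w ∈ R.weylGroup) (hiw : R.len (R.S i * w) < R.len w)
    (hiv : R.len v < R.len (R.S i * v)) (hn : R.len w ≤ n + 1) :
    R.ChainLE v (R.S i * w) := by
  obtain ⟨l, hl, hlw⟩ := exists_reduced hR (mul_mem (S_mem i) hw)
  have hil : R.Reduced (i :: l) :=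
    (reduced_cons_iff hR).2 ⟨hl, by rwa [hlw, S_mul_S_mul hR]⟩
  have hlen : l.length ≤ n := by
    unfold Reduced at hl
    rw [hlw] at hl
    omega
  obtain ⟨m, hm, rfl⟩ := h.exists_sublist hR hil (by rw [wordProd_cons, hlw, S_mul_S_mul hR])
  rw [← hlw]
  rcases sublist_cons_iff.1 hm with hm | ⟨m', rfl, hm'⟩
  · exact hC l hl hlen m hm
  · rw [wordProd_cons, S_mul_S_mul hR] at hiv
    rw [wordProd_cons]
    exact .head (S_mul_reflStep hR hiv) (hC l hl hlen m' hm')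

lemma ChainLE.S_mul_chainLE_S_mul (hR : R.IsRootSystem) {n : ℕ} (hC : R.SubwordChainLE n)
    {v w : R.Aut} {i : Fin R.r} (h : R.ChainLE v w) (hw : w ∈ R.weylGroup)
    (hiw : R.len w < R.len (R.S i * w)) (hiv : R.len v < R.len (R.S i * v))
    (hn : R.len w ≤ n) : R.ChainLE (R.S i * v) (R.S i * w) := by
  induction hk : R.len w using Nat.strong_induction_on generalizing v w with
  | _ k ih =>
  rcases Relation.ReflTransGen.cases_tail h with rfl | ⟨y, hvy, hyw⟩
  · exact .refl
  have hyW := hyw.mem hw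
  have hyw_len := hyw.len_lt
  rcases (len_S_mul_ne hR hyW i).lt_or_gt with hdown | hup
  · have h₁ := ChainLE.chainLE_S_mul_of_len_S_mul_lt hR hC hvy hyW hdown hiv (by omega)
    have h₂ := ih _ (by omega) h₁ (mul_mem (S_mem i) hyW) (by rwa [S_mul_S_mul hR]) hiv
      (by omega) rfl
    rw [S_mul_S_mul hR] at h₂
    exact (h₂.tail hyw).tail (reflStep_S_mul hR hiw)
  · have := len_S_mul_le hR hyW i
    exact (ih _ (by omega) hvy hyW hup hiv (by omega) rfl).tail (hyw.S_mul hR i (by omega))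

lemma SubwordChainLE.succ (hR : R.IsRootSystem) {n : ℕ} (hC : R.SubwordChainLE n) :
    R.SubwordChainLE (n + 1) := by
  rintro (_ | ⟨i, l⟩) hred hlen l' hl'
  · rw [sublist_nil.1 hl']
    exact .refl
  obtain ⟨hl, hup⟩ := (reduced_cons_iff hR).1 hred
  have hlen' : l.length ≤ n := by simpa using hlen
  rw [wordProd_cons]
  rcases sublist_cons_iff.1 hl' with hl' | ⟨m, rfl, hm⟩
  · exact (hC l hl hlen' l' hl').tail (reflStep_S_mul hR hup)
  have hml := hC l hl hlen' m hm
  rw [wordProd_cons]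
  rcases (len_S_mul_ne hR (wordProd_mem m) i).lt_or_gt with hdown | hup'
  · exact (hml.head (S_mul_reflStep hR hdown)).tail (reflStep_S_mul hR hup)
  · unfold Reduced at hl
    exact hml.S_mul_chainLE_S_mul hR hC (wordProd_mem l) hup hup' (by omega)

lemma subwordChainLE (hR : R.IsRootSystem) : ∀ n, R.SubwordChainLE n
  | 0 => by
    rintro l - hlen l' hl'
    obtain rfl := length_eq_zero_iff.1 (Nat.le_zero.1 hlen)
    rw [sublist_nil.1 hl']
    exact .refl
  | n + 1 => (subwordChainLE hR n).succ hR

lemma bruhatLE_iff_chainLE (hR : R.IsRootSystem) {u w : R.Aut} (hw : w ∈ R.weylGroup) :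
    R.BruhatLE u w ↔ R.ChainLE u w := by
  constructor
  · rintro ⟨l, hl, rfl, l', hl', rfl⟩
    exact subwordChainLE hR l.length l hl le_rfl l' hl'
  · intro h
    obtain ⟨l, hl, hlw⟩ := exists_reduced hR hw
    obtain ⟨m, hm, hmu⟩ := h.exists_sublist hR hl hlw
    exact ⟨l, hl, hlw, m, hm, hmu⟩

lemma dmulList_mem {w : R.Aut} (hw : w ∈ R.weylGroup) (l : List (Fin R.r)) :
    R.dmulList l w ∈ R.weylGroup := by
  induction l with
  | nil => exact hw
  | cons i l ih =>
    change R.dmulStep i (R.dmulList l w) ∈ R.weylGroup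
    unfold dmulStep
    split_ifs
    exacts [mul_mem (S_mem i) ih, ih]

lemma ChainLE.dmulStep (hR : R.IsRootSystem) {v w : R.Aut} (h : R.ChainLE v w)
    (hw : w ∈ R.weylGroup) (i : Fin R.r) : R.ChainLE (R.dmulStep i v) (R.dmulStep i w) := by
  unfold RootData.dmulStep
  split_ifs with hiv hiw hiw
  · exact h.S_mul_chainLE_S_mul hR (subwordChainLE hR _) hw hiw hiv le_rfl
  · have hdown := lt_of_le_of_ne (not_lt.1 hiw) (len_S_mul_ne hR hw i)
    have h₁ := h.chainLE_S_mul_of_len_S_mul_lt hR (subwordChainLE hR (R.len w)) hw hdown hiv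
      (Nat.le_succ _)
    simpa [S_mul_S_mul hR] using h₁.S_mul_chainLE_S_mul hR (subwordChainLE hR _)
      (mul_mem (S_mem i) hw) (by rwa [S_mul_S_mul hR]) hiv le_rfl
  · exact h.tail (reflStep_S_mul hR hiw)
  · exact h

lemma ChainLE.dmulList (hR : R.IsRootSystem) {v w : R.Aut} (h : R.ChainLE v w)
    (hw : w ∈ R.weylGroup) (l : List (Fin R.r)) :
    R.ChainLE (R.dmulList l v) (R.dmulList l w) := by
  induction l with
  | nil => exact h
  | cons i l ih => exact ih.dmulStep hR (dmulList_mem hw l) i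

lemma dmulList_eq_wordProd_mul (hR : R.IsRootSystem) {v : R.Aut} (hv : v ∈ R.weylGroup)
    {l : List (Fin R.r)} (h : R.len (R.wordProd l * v) = l.length + R.len v) :
    R.dmulList l v = R.wordProd l * v := by
  induction l with
  | nil => simp [dmulList]
  | cons i l ih =>
    have hlv := mul_mem (wordProd_mem l) hv
    have := len_mul_le hR (wordProd_mem l) hv
    have := len_wordProd_le l
    have := len_S_mul_le hR hlv i
    rw [wordProd_cons, mul_assoc, length_cons] at h
    change R.dmulStep i (R.dmulList l v) = _
    rw [wordProd_cons, mul_assoc, ih (by omega), dmulStep, if_pos (by omega)]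

lemma exists_chainLE_dmulList_eq (hR : R.IsRootSystem) {w : R.Aut} (hw : w ∈ R.weylGroup)
    {l : List (Fin R.r)} (hl : R.Reduced l) :
    ∃ w'', R.ChainLE w'' w ∧ R.dmulList l w = R.wordProd l * w'' := by
  induction l with
  | nil => exact ⟨w, .refl, by simp [dmulList]⟩
  | cons i l ih =>
    obtain ⟨hl, hup⟩ := (reduced_cons_iff hR).1 hl
    obtain ⟨w'', hw'', heq⟩ := ih hl
    have hw''W := hw''.mem hw
    have hxw := mul_mem (wordProd_mem l) hw''W
    change ∃ w'', _ ∧ R.dmulStep i (R.dmulList l w) = _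
    rw [heq, wordProd_cons, dmulStep]
    rcases (len_S_mul_ne hR hxw i).lt_or_gt with hdown | hup'
    · -- `S i x w'' = x (x⁻¹ S i x) w''`, and the reflection `x⁻¹ S i x` shortens `w''`
      rw [if_neg hdown.not_gt]
      have ht := (isReflection_S hR i).conj (inv_mem (wordProd_mem l))
        ((lt_len_S_mul_iff hR (wordProd_mem l) i).1 hup)
      rw [inv_inv] at ht
      have hlt : R.len (_ * w'') < R.len w'' := ht.len_mul_lt hR hw''W (by
        rw [len_S_mul_lt_iff hR hxw, mul_inv_rev] at hdown
        exact hdown)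
      refine ⟨_, .head ⟨_, _, ht, ?_, hlt⟩ hw'', ?_⟩
      · rw [← mul_assoc, ht.mul_self, one_mul]
      · simp only [mul_assoc, mul_inv_cancel_left, S_mul_S_mul hR]
    · rw [if_pos hup']
      exact ⟨w'', hw'', (mul_assoc _ _ _).symm⟩

lemma exists_reduced_dmul_eq (hR : R.IsRootSystem) {v : R.Aut} (hv : v ∈ R.weylGroup)
    (w : R.Aut) : ∃ l, R.Reduced l ∧ R.wordProd l = v ∧ R.dmul v w = R.dmulList l w := by
  have h : ∃ l, R.Reduced l ∧ R.wordProd l = v := exists_reduced hR hv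
  exact ⟨h.choose, h.choose_spec.1, h.choose_spec.2, by rw [dmul, dif_pos h]⟩

lemma IsLongest.inv_apply_notMem_pos (hR : R.IsRootSystem) {w₀ : R.Aut}
    (h₀ : R.IsLongest w₀) {β : R.V} (hβ : β ∈ R.pos) : w₀⁻¹ β ∉ R.pos := by
  refine apply_notMem_pos_of_forall_simple hR (inv_mem h₀.1) (fun i => ?_) hβ
  exact (len_S_mul_lt_iff hR h₀.1 i).1
    ((h₀.2 _ (mul_mem (S_mem i) h₀.1)).lt_of_ne (len_S_mul_ne hR h₀.1 i))

lemma IsLongest.len_wordProd_mul_add (hR : R.IsRootSystem) {w₀ : R.Aut}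
    (h₀ : R.IsLongest w₀) {l : List (Fin R.r)} (hl : R.Reduced l) :
    R.len (R.wordProd l * w₀) + l.length = R.len w₀ := by
  induction l with
  | nil => simp
  | cons i l ih =>
    obtain ⟨hl, hup⟩ := (reduced_cons_iff hR).1 hl
    have hxW := mul_mem (wordProd_mem l) h₀.1
    have hdown : R.len (R.S i * (R.wordProd l * w₀)) < R.len (R.wordProd l * w₀) := by
      rw [len_S_mul_lt_iff hR hxW, mul_inv_rev, LinearEquiv.mul_apply]
      exact h₀.inv_apply_notMem_pos hR ((lt_len_S_mul_iff hR (wordProd_mem l) i).1 hup)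
    have := len_le_len_S_mul_add_one hR hxW i
    have := ih hl
    rw [wordProd_cons, mul_assoc, length_cons]
    omega

lemma IsLongest.len_mul_add_len (hR : R.IsRootSystem) {w₀ : R.Aut} (h₀ : R.IsLongest w₀)
    {v : R.Aut} (hv : v ∈ R.weylGroup) : R.len (v * w₀) + R.len v = R.len w₀ := by
  obtain ⟨l, hl, rfl⟩ := exists_reduced hR hv
  rw [hl]
  exact h₀.len_wordProd_mul_add hR hl

end RootData

open RootData

theorem statement10 (R : RootData) (hR : R.IsRootSystem)
    (w : R.Aut) (hw : w ∈ R.weylGroup) :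
    (∀ v : R.Aut, v ∈ R.weylGroup → R.BruhatLE (v * R.dmul v⁻¹ w) w) ∧
      ∀ w₀ : R.Aut, R.IsLongest w₀ → ∀ v : R.Aut, v ∈ R.weylGroup →
        R.BruhatLE v w → (v * w₀) * R.dmul (v * w₀)⁻¹ w = v := by
  refine ⟨fun v hv => ?_, fun w₀ h₀ v hv hvw => ?_⟩
  · obtain ⟨l, hl, hlv, hdmul⟩ := exists_reduced_dmul_eq hR (inv_mem hv) w
    obtain ⟨w'', hw'', heq⟩ := exists_chainLE_dmulList_eq hR hw hl
    rw [hdmul, heq, hlv, mul_inv_cancel_left]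
    exact (bruhatLE_iff_chainLE hR hw).2 hw''
  · have hvw₀ := mul_mem hv h₀.1
    obtain ⟨l, hl, hlu, hdmul⟩ := exists_reduced_dmul_eq hR (inv_mem hvw₀) w
    have hprod : R.wordProd l * v = w₀⁻¹ := by
      rw [hlu]
      group
    have hadd : R.len (R.wordProd l * v) = l.length + R.len v := by
      rw [hprod, ← hl, hlu, len_inv hR h₀.1, len_inv hR hvw₀, h₀.len_mul_add_len hR hv]
    have hle : R.ChainLE w₀⁻¹ (R.dmulList l w) := by
      rw [← hprod, ← dmulList_eq_wordProd_mul hR hv hadd]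
      exact ((bruhatLE_iff_chainLE hR hw).1 hvw).dmulList hR hw l
    have hmax : R.len (R.dmulList l w) ≤ R.len w₀⁻¹ := by
      rw [len_inv hR h₀.1]
      exact h₀.2 _ (dmulList_mem hw l)
    rw [hdmul, ← hle.eq_of_len_le hmax, mul_inv_cancel_right]
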